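/- Let b, c, ν, ρ ∈ ℂ with Re(ρ) > 0, Re(c) > 1 and Re(ν) > -1. Then for every real x > 0, d/dx [ x^{ν+1} · d/dx ( x^{-ν} · G_ν^{(b,c-1)}(x;ρ) ) ] = -b(c-1) · G_{ν+1}^{(b,c)}(x;ρ), where the derivatives are with respect to the real variable x and x^{ν+1}, x^{-ν} are principal complex powers of the positive real x. -/

import Mathlib

open Complex MeasureTheory Real Set

/-- Extended Gamma function `Γ_ρ(x) = ∫_0^∞ t^(x-1) e^(-t-ρ/t) dt`. -/
noncomputable def extGamma (ρ x : ℂ) : ℂ :=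
  ∫ t in Ioi (0:ℝ), (t:ℂ) ^ (x - 1) * Complex.exp (-(t:ℂ) - ρ / (t:ℂ))

/-- Generalized Pochhammer symbol `(c;ρ)_μ = Γ_ρ(c+μ)/Γ(c)`. -/
noncomputable def genPoch (c ρ μ : ℂ) : ℂ := extGamma ρ (c + μ) / Complex.Gamma c

/-- Unified four parameter Bessel function `G_ν^{(b,c)}(z;ρ)` with complex order,
powers being principal complex powers. -/
noncomputable def unifiedG (b c ν ρ z : ℂ) : ℂ :=
  ∑' k : ℕ, (-b) ^ k * genPoch c ρ (2 * (k:ℂ) + ν) * (z / 2) ^ (2 * (k:ℂ) + ν) /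
    ((k.factorial : ℂ) * Complex.Gamma (ν + (k:ℂ) + 1) * Complex.Gamma (ν + 2 * (k:ℂ) + 1))

/-- Unified four parameter Bessel function with integer order, powers being integer powers. -/
noncomputable def unifiedGInt (b c ρ : ℂ) (ν : ℤ) (z : ℂ) : ℂ :=
  ∑' k : ℕ, (-b) ^ k * genPoch c ρ (2 * (k:ℂ) + (ν:ℂ)) * (z / 2) ^ (2 * (k:ℤ) + ν) /
    ((k.factorial : ℂ) * Complex.Gamma ((ν:ℂ) + (k:ℂ) + 1) * Complex.Gamma ((ν:ℂ) + 2 * (k:ℂ) + 1))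

/-- Pochhammer symbol `(a)_k = Γ(a+k)/Γ(a)`. -/
noncomputable def poch (a : ℂ) (k : ℕ) : ℂ := Complex.Gamma (a + (k:ℂ)) / Complex.Gamma a

/-- Generalized hypergeometric function `₀F₃`. -/
noncomputable def hyp0F3 (a₁ a₂ a₃ w : ℂ) : ℂ :=
  ∑' k : ℕ, w ^ k / (poch a₁ k * poch a₂ k * poch a₃ k * (k.factorial : ℂ))

/-- Generalized hypergeometric function `₂F₃`. -/
noncomputable def hyp2F3 (a₁ a₂ b₁ b₂ b₃ w : ℂ) : ℂ :=
  ∑' k : ℕ, poch a₁ k * poch a₂ k * w ^ k /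
    (poch b₁ k * poch b₂ k * poch b₃ k * (k.factorial : ℂ))

/-- Bessel function of the first kind `J_μ(z)` for real `z > 0`. -/
noncomputable def besselJ (μ : ℂ) (z : ℝ) : ℂ :=
  ∑' k : ℕ, (-1) ^ k * ((z:ℂ) / 2) ^ (2 * (k:ℂ) + μ) /
    ((k.factorial : ℂ) * Complex.Gamma (μ + (k:ℂ) + 1))

/-- Generalized four parameter spherical Bessel function
`g_ν^{(b,c)}(z;ρ) = √(π/(2z)) · G_{ν+1/2}^{(b,c-1/2)}(z;ρ)`. -/
noncomputable def sphG (b c ν ρ : ℂ) (z : ℝ) : ℂ :=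
  (Real.sqrt (π / (2 * z)) : ℂ) * unifiedG b (c - 1/2) (ν + 1/2) ρ (z:ℂ)

/-- Generalized four parameter Bessel-Clifford function
`C_ν^{(b,λ)}(z;ρ) = z^{-ν/2} · G_ν^{(b,λ)}(2√z;ρ)` for real `z > 0`. -/
noncomputable def cliffC (b lam ν ρ : ℂ) (z : ℝ) : ℂ :=
  (z:ℂ) ^ (-ν / 2) * unifiedG b lam ν ρ ((2 * Real.sqrt z : ℝ) : ℂ)

/-!
For `x > 0`, `x ^ (-ν) * G_ν^{(b,c-1)}(x) = ∑ a_k x ^ (2k)`, where `a_k` is the coefficient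
of `x ^ (2k+ν)` in `G_ν^{(b,c-1)}`. Since `‖Γ_ρ(w)‖ ≤ Γ(Re w)` for `Re ρ ≥ 0`, for large `k`
the term `‖a_k‖ rᵏ` is bounded, up to a constant, by
`Γ(Re(c-1+ν) + 2k) qᵏ / (k! ‖Γ(ν+k+1)‖ ‖Γ(ν+2k+1)‖)` with `q = ‖b‖ r / 4`, which is summable
for every `q` by the ratio test. Hence both series may be differentiated termwise on
`(x/2, 2x)`, giving `∑ 2k (2k+ν) a_k x ^ (2k+ν-1)`. After the shift `k ↦ k+1`, the recurrence
`Γ(s)⁻¹ = s Γ(s+1)⁻¹` (at `s = c - 1` and `s = ν + 2k + 2`) turns each term into `-b(c-1)`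
times the matching term of `G_{ν+1}^{(b,c)}(x)`.
-/

open Filter Topology

theorem rpow_le_rpow_add_rpow_of_mem_Icc {ε R y : ℝ} (t : ℝ) (hε : 0 < ε) (hy : y ∈ Icc ε R) :
    y ^ t ≤ ε ^ t + R ^ t := by
  rcases le_total 0 t with ht | ht
  · linarith [Real.rpow_le_rpow (hε.le.trans hy.1) hy.2 ht, Real.rpow_nonneg hε.le t]
  · linarith [Real.rpow_le_rpow_of_nonpos hε hy.1 ht,
      Real.rpow_nonneg (hε.le.trans (hy.1.trans hy.2)) t]

theorem summable_norm_mul_two_mul_add_mul_pow {a : ℕ → ℂ}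
    (ha : ∀ r, 0 ≤ r → Summable fun k => ‖a k‖ * r ^ k) (σ : ℂ) {r : ℝ} (hr : 0 ≤ r) :
    Summable fun k : ℕ => ‖a k * (2 * k + σ)‖ * r ^ k := by
  refine .of_nonneg_of_le (fun k => by positivity) (fun k => ?_)
    ((ha (2 * r) (by positivity)).mul_left (2 + ‖σ‖))
  have hk : (k:ℝ) + 1 ≤ 2 ^ k := by exact_mod_cast Nat.lt_two_pow_self
  have hpoly : ‖(2 * k + σ : ℂ)‖ ≤ (2 + ‖σ‖) * 2 ^ k := by
    refine (norm_add_le _ _).trans ?_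
    rw [norm_mul, Complex.norm_two, Complex.norm_natCast]
    nlinarith [norm_nonneg σ, Nat.one_le_two_pow (n := k)]
  calc ‖a k * (2 * k + σ)‖ * r ^ k ≤ ‖a k‖ * ((2 + ‖σ‖) * 2 ^ k) * r ^ k := by
        rw [norm_mul]; gcongr
    _ = (2 + ‖σ‖) * (‖a k‖ * (2 * r) ^ k) := by ring

theorem hasDerivAt_tsum_mul_ofReal_cpow {a s : ℕ → ℂ} {ε R x : ℝ} (hε : 0 < ε)
    (hx : x ∈ Ioo ε R)
    (hu : Summable fun k => ‖a k * s k‖ * (ε ^ ((s k).re - 1) + R ^ ((s k).re - 1)))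
    (hsum : Summable fun k => a k * (x:ℂ) ^ s k) :
    HasDerivAt (fun y : ℝ => ∑' k, a k * (y:ℂ) ^ s k)
      (∑' k, a k * s k * (x:ℂ) ^ (s k - 1)) x := by
  have hderiv : ∀ k (y : ℝ), y ∈ Ioo ε R →
      HasDerivAt (fun y : ℝ => a k * (y:ℂ) ^ s k) (a k * s k * (y:ℂ) ^ (s k - 1)) y := by
    intro k y hy
    have h := (hasStrictDerivAt_cpow_const (c := s k)
      (ofReal_mem_slitPlane.2 (hε.trans hy.1))).hasDerivAt.comp_ofReal.const_mul (a k)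
    simpa only [mul_assoc] using h
  refine hasDerivAt_tsum_of_isPreconnected hu isOpen_Ioo isPreconnected_Ioo hderiv
    (fun k y hy => ?_) hx hsum hx
  rw [norm_mul, norm_cpow_eq_rpow_re_of_pos (hε.trans hy.1), sub_re, one_re]
  exact mul_le_mul_of_nonneg_left
    (rpow_le_rpow_add_rpow_of_mem_Icc _ hε (Ioo_subset_Icc_self hy)) (norm_nonneg _)

theorem hasDerivAt_tsum_mul_ofReal_cpow_two_mul_add {a : ℕ → ℂ}
    (ha : ∀ r, 0 ≤ r → Summable fun k => ‖a k‖ * r ^ k) (σ : ℂ) {x : ℝ} (hx : 0 < x) :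
    HasDerivAt (fun y : ℝ => ∑' k : ℕ, a k * (y:ℂ) ^ (2 * (k:ℂ) + σ))
      (∑' k : ℕ, a k * (2 * k + σ) * (x:ℂ) ^ (2 * (k:ℂ) + σ - 1)) x := by
  have hre (k : ℕ) : (2 * (k:ℂ) + σ).re = 2 * k + σ.re := by simp
  have hpow {y : ℝ} (hy : 0 < y) (t : ℝ) (k : ℕ) : y ^ (2 * (k:ℝ) + t) = y ^ t * (y ^ 2) ^ k := by
    rw [Real.rpow_add hy, ← pow_mul, ← Real.rpow_natCast, mul_comm]; push_cast; ring
  refine hasDerivAt_tsum_mul_ofReal_cpow (ε := x / 2) (R := 2 * x) (by positivity)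
    ⟨by linarith, by linarith⟩ ?_ ?_
  · have hε := (summable_norm_mul_two_mul_add_mul_pow ha σ (sq_nonneg (x / 2))).mul_left
      ((x / 2) ^ (σ.re - 1))
    have hR := (summable_norm_mul_two_mul_add_mul_pow ha σ (sq_nonneg (2 * x))).mul_left
      ((2 * x) ^ (σ.re - 1))
    refine (hε.add hR).congr fun k => ?_
    rw [hre, add_sub_assoc, hpow (by positivity), hpow (by positivity)]
    ring
  · refine .of_norm (((ha (x ^ 2) (by positivity)).mul_left (x ^ σ.re)).congr fun k => ?_)
    rw [norm_mul, norm_cpow_eq_rpow_re_of_pos hx, hre, hpow hx]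
    ring

theorem norm_extGamma_le {ρ w : ℂ} (hρ : 0 ≤ ρ.re) (hw : 0 < w.re) :
    ‖extGamma ρ w‖ ≤ Real.Gamma w.re := by
  rw [Real.Gamma_eq_integral hw, extGamma]
  refine norm_integral_le_of_norm_le (Real.GammaIntegral_convergent hw) ?_
  filter_upwards [ae_restrict_mem measurableSet_Ioi] with t (ht : 0 < t)
  rw [norm_mul, Complex.norm_exp, Complex.norm_cpow_eq_rpow_re_of_pos ht, mul_comm]
  have hexp : (-(t:ℂ) - ρ / t).re ≤ -t := by
    simp only [sub_re, neg_re, ofReal_re, div_ofReal_re]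
    linarith [div_nonneg hρ ht.le]
  rw [sub_re w, one_re]
  gcongr

theorem genPoch_sub_one_add_one (c ρ μ : ℂ) :
    genPoch (c - 1) ρ (μ + 1) = (c - 1) * genPoch c ρ μ := by
  rw [genPoch, genPoch, div_eq_mul_inv, one_div_Gamma_eq_self_mul_one_div_Gamma_add_one,
    sub_add_cancel, show c - 1 + (μ + 1) = c + μ by ring]
  ring

noncomputable def unifiedGMajorant (α : ℝ) (ν : ℂ) (q : ℝ) (k : ℕ) : ℝ :=
  Real.Gamma (α + 2 * k) * q ^ k /
    (k.factorial * ‖Complex.Gamma (ν + k + 1)‖ * ‖Complex.Gamma (ν + 2 * k + 1)‖)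

theorem unifiedGMajorant_succ {α : ℝ} {ν : ℂ} (q : ℝ) {k : ℕ} (hα : 0 < α + 2 * k)
    (hν : 0 < ν.re + k + 1) :
    unifiedGMajorant α ν q (k + 1) = q * (α + 2 * k) * (α + 2 * k + 1) /
      ((k + 1) * ‖ν + k + 1‖ * ‖ν + 2 * k + 1‖ * ‖ν + 2 * k + 2‖) * unifiedGMajorant α ν q k := by
  have hk : (0:ℝ) ≤ k := k.cast_nonneg
  have hpos {z : ℂ} (hz : 0 < z.re) : z ≠ 0 := fun h => by simp [h] at hz
  have hz1 : ν + k + 1 ≠ 0 := hpos (by simpa using hν)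
  have hz2 : ν + 2 * k + 1 ≠ 0 := hpos (by simp; linarith)
  have hz3 : ν + 2 * k + 2 ≠ 0 := hpos (by simp; linarith)
  have hΓα : Real.Gamma (α + 2 * ((k + 1 : ℕ) : ℝ)) =
      (α + 2 * k + 1) * ((α + 2 * k) * Real.Gamma (α + 2 * k)) := by
    rw [show α + 2 * ((k + 1 : ℕ) : ℝ) = α + 2 * k + 1 + 1 by push_cast; ring,
      Real.Gamma_add_one (by linarith), Real.Gamma_add_one hα.ne']
  have hΓ1 :
      Complex.Gamma (ν + ((k + 1 : ℕ) : ℂ) + 1) = (ν + k + 1) * Complex.Gamma (ν + k + 1) := by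
    rw [← Complex.Gamma_add_one _ hz1]; push_cast; ring_nf
  have hΓ2 : Complex.Gamma (ν + 2 * ((k + 1 : ℕ) : ℂ) + 1) =
      (ν + 2 * k + 2) * ((ν + 2 * k + 1) * Complex.Gamma (ν + 2 * k + 1)) := by
    rw [← Complex.Gamma_add_one _ hz2, show ν + 2 * (k:ℂ) + 2 = ν + 2 * k + 1 + 1 by ring,
      ← Complex.Gamma_add_one _ (by rwa [add_assoc _ (1:ℂ), one_add_one_eq_two])]
    push_cast; ring_nf
  have hG1 : Complex.Gamma (ν + k + 1) ≠ 0 := Gamma_ne_zero_of_re_pos (by simpa using hν)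
  have hG2 : Complex.Gamma (ν + 2 * k + 1) ≠ 0 := Gamma_ne_zero_of_re_pos (by simp; linarith)
  simp only [unifiedGMajorant, hΓα, hΓ1, hΓ2, norm_mul, Nat.factorial_succ, Nat.cast_mul, pow_succ]
  field_simp
  push_cast
  ring

-- Numerator at most `9 q k²`, denominator at least `k⁴ / 2`.
theorem unifiedGMajorant_ratio_le_half {α q : ℝ} {ν : ℂ} {k : ℕ} (hq : 0 ≤ q)
    (hk : |α| + 2 * |ν.re| + 36 * q + 1 ≤ k) :
    q * (α + 2 * k) * (α + 2 * k + 1) /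
      ((k + 1) * ‖ν + k + 1‖ * ‖ν + 2 * k + 1‖ * ‖ν + 2 * k + 2‖) ≤ 1 / 2 := by
  have hk1 : (1:ℝ) ≤ k := by linarith [abs_nonneg α, abs_nonneg ν.re]
  have hα : 0 ≤ α + 2 * k := by linarith [neg_abs_le α, abs_nonneg ν.re]
  have hα' : α + 2 * k + 1 ≤ 3 * k := by linarith [le_abs_self α, abs_nonneg ν.re]
  have hν (m t : ℝ) (ht : 0 ≤ t) : m * k - k / 2 ≤ ‖ν + m * (k:ℂ) + t‖ := by
    have := re_le_norm (ν + m * (k:ℂ) + t)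
    simp only [add_re, mul_re, ofReal_re, ofReal_im, natCast_re, natCast_im] at this
    linarith [neg_abs_le ν.re, abs_nonneg α]
  have hν1 := hν 1 1 zero_le_one
  have hν2 := hν 2 1 zero_le_one
  have hν3 := hν 2 2 zero_le_two
  push_cast at hν1 hν2 hν3
  simp only [one_mul] at hν1
  have hq36 : 36 * q * k ^ 2 ≤ k ^ 3 * k := by
    have h36 : 36 * q ≤ k := by linarith [abs_nonneg α, abs_nonneg ν.re]
    nlinarith [mul_le_mul_of_nonneg_right h36 (sq_nonneg (k:ℝ)),
      mul_le_mul_of_nonneg_left hk1 (pow_nonneg (zero_le_one.trans hk1) 3)]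
  have hden : 0 < (k + 1) * ‖ν + k + 1‖ * ‖ν + 2 * k + 1‖ * ‖ν + 2 * k + 2‖ := by
    have h1 : 0 < ‖ν + k + 1‖ := by linarith
    have h2 : 0 < ‖ν + 2 * k + 1‖ := by linarith
    have h3 : 0 < ‖ν + 2 * k + 2‖ := by linarith
    positivity
  rw [div_le_iff₀ hden]
  calc q * (α + 2 * k) * (α + 2 * k + 1) ≤ q * (3 * k) * (3 * k) := by gcongr; linarith
    _ ≤ 1 / 2 * (k * (k / 2) * k * k) := by nlinarith
    _ ≤ 1 / 2 * ((k + 1) * ‖ν + k + 1‖ * ‖ν + 2 * k + 1‖ * ‖ν + 2 * k + 2‖) := by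
      gcongr <;> linarith

theorem summable_unifiedGMajorant (α : ℝ) (ν : ℂ) {q : ℝ} (hq : 0 ≤ q) :
    Summable (unifiedGMajorant α ν q) := by
  refine summable_of_ratio_norm_eventually_le (r := 1 / 2) (by norm_num) ?_
  filter_upwards [eventually_ge_atTop (⌈|α| + 2 * |ν.re| + 36 * q⌉₊ + 1)] with k hk
  have hk : |α| + 2 * |ν.re| + 36 * q + 1 ≤ k := by
    have : ((⌈|α| + 2 * |ν.re| + 36 * q⌉₊ + 1 : ℕ) : ℝ) ≤ k := by exact_mod_cast hk
    push_cast at this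
    linarith [Nat.le_ceil (|α| + 2 * |ν.re| + 36 * q)]
  have hα : 0 < α + 2 * k := by linarith [neg_abs_le α, abs_nonneg ν.re]
  have hM : 0 ≤ unifiedGMajorant α ν q k :=
    div_nonneg (mul_nonneg (Real.Gamma_pos_of_pos hα).le (pow_nonneg hq k)) (by positivity)
  rw [unifiedGMajorant_succ q hα (by linarith [neg_abs_le ν.re, abs_nonneg α]), norm_mul,
    Real.norm_of_nonneg hM, Real.norm_of_nonneg (div_nonneg (by positivity) (by positivity))]
  exact mul_le_mul_of_nonneg_right (unifiedGMajorant_ratio_le_half hq hk) hM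

noncomputable def unifiedGCoeff (b c ν ρ : ℂ) (k : ℕ) : ℂ :=
  (-b) ^ k * genPoch c ρ (2 * k + ν) / ((k.factorial : ℂ) * Complex.Gamma (ν + k + 1) *
    Complex.Gamma (ν + 2 * k + 1) * 2 ^ (2 * (k:ℂ) + ν))

theorem summable_norm_unifiedGCoeff_mul_pow (b c ν : ℂ) {ρ : ℂ} (hρ : 0 ≤ ρ.re) {r : ℝ}
    (hr : 0 ≤ r) : Summable fun k => ‖unifiedGCoeff b c ν ρ k‖ * r ^ k := by
  refine ((summable_unifiedGMajorant (c.re + ν.re) ν (q := ‖b‖ * r / 4) (by positivity)).mul_left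
    (‖Complex.Gamma c‖⁻¹ * (2 ^ ν.re)⁻¹)).of_norm_bounded_eventually_nat ?_
  filter_upwards [eventually_gt_atTop ⌈-(c.re + ν.re)⌉₊] with k hk
  have hre : (c + (2 * k + ν)).re = c.re + ν.re + 2 * k := by simp; ring
  have hpos : 0 < (c + (2 * k + ν)).re := by
    rw [hre]
    have := Nat.lt_of_ceil_lt hk
    linarith [(Nat.cast_nonneg k : (0:ℝ) ≤ k)]
  have htwo : ‖(2:ℂ) ^ (2 * (k:ℂ) + ν)‖ = 4 ^ k * 2 ^ ν.re := by
    rw [← ofReal_ofNat, norm_cpow_eq_rpow_re_of_pos two_pos]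
    simp [Real.rpow_add, Real.rpow_mul]
    norm_num
  rw [Real.norm_of_nonneg (by positivity)]
  calc ‖unifiedGCoeff b c ν ρ k‖ * r ^ k = (‖Complex.Gamma c‖⁻¹ * (2 ^ ν.re)⁻¹) *
      (‖extGamma ρ (c + (2 * k + ν))‖ * (‖b‖ * r / 4) ^ k /
        (k.factorial * ‖Complex.Gamma (ν + k + 1)‖ * ‖Complex.Gamma (ν + 2 * k + 1)‖)) := by
        simp only [unifiedGCoeff, genPoch, norm_div, norm_mul, norm_pow, norm_neg, htwo,
          Complex.norm_natCast, div_pow, mul_pow]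
        field_simp
    _ ≤ _ := by
      unfold unifiedGMajorant
      gcongr
      exact (norm_extGamma_le hρ hpos).trans_eq (by rw [hre])

theorem unifiedG_ofReal_eq_tsum (b c ν ρ : ℂ) {x : ℝ} (hx : 0 ≤ x) :
    unifiedG b c ν ρ x = ∑' k : ℕ, unifiedGCoeff b c ν ρ k * (x:ℂ) ^ (2 * (k:ℂ) + ν) := by
  refine tsum_congr fun k => ?_
  rw [← ofReal_ofNat, div_cpow_ofReal_nonneg hx zero_le_two, unifiedGCoeff, ofReal_ofNat]
  ring

theorem ofReal_cpow_neg_mul_unifiedG (b c ν ρ : ℂ) {x : ℝ} (hx : 0 < x) :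
    (x:ℂ) ^ (-ν) * unifiedG b c ν ρ x =
      ∑' k : ℕ, unifiedGCoeff b c ν ρ k * (x:ℂ) ^ (2 * (k:ℂ)) := by
  rw [unifiedG_ofReal_eq_tsum b c ν ρ hx.le, ← tsum_mul_left]
  refine tsum_congr fun k => ?_
  rw [mul_left_comm, ← cpow_add _ _ (ofReal_ne_zero.2 hx.ne'), neg_add_cancel_comm_assoc]

theorem unifiedGCoeff_succ_mul (b c ν ρ : ℂ) (k : ℕ) :
    unifiedGCoeff b (c - 1) ν ρ (k + 1) * (2 * ((k + 1 : ℕ) : ℂ)) * (2 * ((k + 1 : ℕ) : ℂ) + ν) =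
      -b * (c - 1) * unifiedGCoeff b c (ν + 1) ρ k := by
  have hpoch : genPoch (c - 1) ρ (2 * ((k + 1 : ℕ) : ℂ) + ν) =
      (c - 1) * genPoch c ρ (2 * k + (ν + 1)) := by
    rw [← genPoch_sub_one_add_one]; push_cast; ring_nf
  have hGamma : (Complex.Gamma (ν + 1 + 2 * k + 1))⁻¹ =
      (ν + 2 * ((k + 1 : ℕ) : ℂ)) * (Complex.Gamma (ν + 2 * ((k + 1 : ℕ) : ℂ) + 1))⁻¹ := by
    rw [one_div_Gamma_eq_self_mul_one_div_Gamma_add_one]; push_cast; ring_nf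
  have htwo : (2:ℂ) ^ (2 * ((k + 1 : ℕ) : ℂ) + ν) = 2 ^ (2 * (k:ℂ) + (ν + 1)) * 2 := by
    rw [show 2 * ((k + 1 : ℕ) : ℂ) + ν = 2 * k + (ν + 1) + 1 by push_cast; ring,
      cpow_add _ _ two_ne_zero, cpow_one]
  have hfac : (((k + 1).factorial : ℕ) : ℂ) = (k + 1) * k.factorial := by
    push_cast [Nat.factorial_succ]; ring
  simp only [unifiedGCoeff, div_eq_mul_inv, mul_inv, hpoch, hGamma, htwo, hfac, pow_succ]
  field_simp
  push_cast
  ring_nf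

theorem stmt9_general (b c ν ρ : ℂ) (hρ : 0 < ρ.re)
    (x : ℝ) (hx : 0 < x) :
    deriv (fun y : ℝ => (y:ℂ) ^ (ν + 1) *
        deriv (fun w : ℝ => (w:ℂ) ^ (-ν) * unifiedG b (c - 1) ν ρ (w:ℂ)) y) x =
      -b * (c - 1) * unifiedG b c (ν + 1) ρ (x:ℂ) := by
  set a := unifiedGCoeff b (c - 1) ν ρ
  have ha (r : ℝ) (hr : 0 ≤ r) : Summable fun k => ‖a k‖ * r ^ k :=
    summable_norm_unifiedGCoeff_mul_pow b (c - 1) ν hρ.le hr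
  have ha' (r : ℝ) (hr : 0 ≤ r) : Summable fun k : ℕ => ‖a k * (2 * k)‖ * r ^ k := by
    simpa using summable_norm_mul_two_mul_add_mul_pow ha 0 hr
  have hinner {y : ℝ} (hy : 0 < y) :
      HasDerivAt (fun w : ℝ => (w:ℂ) ^ (-ν) * unifiedG b (c - 1) ν ρ w)
        (∑' k : ℕ, a k * (2 * k) * (y:ℂ) ^ (2 * (k:ℂ) - 1)) y := by
    have h := hasDerivAt_tsum_mul_ofReal_cpow_two_mul_add ha 0 hy
    simp only [add_zero] at h
    refine h.congr_of_eventuallyEq ?_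
    filter_upwards [Ioi_mem_nhds hy] with w hw using ofReal_cpow_neg_mul_unifiedG _ _ _ _ hw
  have houter : (fun y : ℝ => (y:ℂ) ^ (ν + 1) *
      deriv (fun w : ℝ => (w:ℂ) ^ (-ν) * unifiedG b (c - 1) ν ρ w) y) =ᶠ[𝓝 x]
      fun y : ℝ => ∑' k : ℕ, a k * (2 * k) * (y:ℂ) ^ (2 * (k:ℂ) + ν) := by
    filter_upwards [Ioi_mem_nhds hx] with y (hy : 0 < y)
    rw [(hinner hy).deriv, ← tsum_mul_left]
    refine tsum_congr fun k => ?_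
    rw [mul_comm, mul_assoc, ← cpow_add _ _ (ofReal_ne_zero.2 hy.ne')]
    ring_nf
  -- The `k = 0` term carries the factor `2 * 0`, so the sum may be shifted by one.
  rw [((hasDerivAt_tsum_mul_ofReal_cpow_two_mul_add ha' ν hx).congr_of_eventuallyEq houter).deriv,
    unifiedG_ofReal_eq_tsum _ _ _ _ hx.le, ← tsum_mul_left,
    ← Nat.succ_injective.tsum_eq (by intro k hk; cases k <;> simp_all)]
  refine tsum_congr fun k => ?_
  rw [← mul_assoc (-b * (c - 1)), ← unifiedGCoeff_succ_mul,
    show 2 * ((k + 1 : ℕ) : ℂ) + ν - 1 = 2 * k + (ν + 1) by push_cast; ring]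

theorem stmt9 (b c ν ρ : ℂ) (hρ : 0 < ρ.re) (hc : 1 < c.re) (hν : -1 < ν.re)
    (x : ℝ) (hx : 0 < x) :
    deriv (fun y : ℝ => (y:ℂ) ^ (ν + 1) *
        deriv (fun w : ℝ => (w:ℂ) ^ (-ν) * unifiedG b (c - 1) ν ρ (w:ℂ)) y) x =
      -b * (c - 1) * unifiedG b c (ν + 1) ρ (x:ℂ) :=
  stmt9_general b c ν ρ hρ x hx
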